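/- The solution operator S: L^∞(0,T;ℝ^{n×n}×ℝⁿ)→C([0,T];ℝⁿ) is directionally differentiable: for all (a,ℓ),(δa,δℓ)∈L^∞(0,T;ℝ^{n×n})×L^∞(0,T;ℝⁿ), with y:=S(a,ℓ) and y^τ:=S(a+τδa, ℓ+τδℓ), one has ‖(y^τ−y)/τ − δy‖_{C([0,T];ℝⁿ)} → 0 as τ↓0, where δy∈C([0,T];ℝⁿ) is the unique solution of δy(t)=∫₀ᵗ ((t−s)^{γ−1}/Γ(γ)) f'(a(s)y(s)+ℓ(s); a(s)δy(s)+δa(s)y(s)+δℓ(s)) ds, t∈[0,T]. -/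

import Mathlib

open MeasureTheory Set Filter Topology

noncomputable section

/-- `ℝⁿ` with the Euclidean norm. -/
abbrev Vec (n : ℕ) := EuclideanSpace ℝ (Fin n)

/-- `ℝ^{n×n}` with the Frobenius (Euclidean) norm. -/
abbrev Mat (n : ℕ) := EuclideanSpace ℝ ((Fin n) × (Fin n))

/-- Matrix-vector multiplication `A * x`. -/
def mv {n : ℕ} (A : Mat n) (x : Vec n) : Vec n :=
  (WithLp.equiv 2 (Fin n → ℝ)).symm (fun i => ∑ j, A (i, j) * x j)

/-- `y ∈ C([0,T];ℝⁿ)` is a mild solution of the state equation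
`∂^γ y = f(a y + ℓ)`, `y(0) = y₀`, i.e. it satisfies the Volterra integral equation
`y(t) = y₀ + ∫₀ᵗ ((t-s)^(γ-1)/Γ(γ)) f(a(s) y(s) + ℓ(s)) ds` for all `t ∈ [0,T]`. -/
def IsMildSolution {n : ℕ} (γ T : ℝ) (y₀ : Vec n) (f : Vec n → Vec n)
    (a : ℝ → Mat n) (ℓ : ℝ → Vec n) (y : ℝ → Vec n) : Prop :=
  ContinuousOn y (Icc 0 T) ∧
  ∀ t ∈ Icc (0:ℝ) T,
    y t = y₀ + ∫ s in (0:ℝ)..t, ((t - s) ^ (γ - 1) / Real.Gamma γ) • f (mv (a s) (y s) + ℓ s)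

/-- `δy` solves the "linearized" integral equation
`δy(t) = ∫₀ᵗ ((t-s)^(γ-1)/Γ(γ)) f'(a y + ℓ; a δy + δa y + δℓ)(s) ds`, `t ∈ [0,T]`,
where `f' z d` denotes the directional derivative of `f` at `z` in direction `d`. -/
def IsLinSolution {n : ℕ} (γ T : ℝ) (f' : Vec n → Vec n → Vec n)
    (a : ℝ → Mat n) (ℓ : ℝ → Vec n) (y : ℝ → Vec n)
    (δa : ℝ → Mat n) (δℓ : ℝ → Vec n) (δy : ℝ → Vec n) : Prop :=
  ContinuousOn δy (Icc 0 T) ∧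
  ∀ t ∈ Icc (0:ℝ) T,
    δy t = ∫ s in (0:ℝ)..t, ((t - s) ^ (γ - 1) / Real.Gamma γ) •
      f' (mv (a s) (y s) + ℓ s) (mv (a s) (δy s) + mv (δa s) (y s) + δℓ s)

/-!
Write `z = a y + ℓ`, `d = a δy + δa y + δℓ` and `Z_τ = (a + τ δa) y^τ + ℓ + τ δℓ`. Subtracting the
integral equations, the error `e_τ = τ⁻¹ (y^τ - y) - δy` is the Riemann–Liouville integral `I^γ` of
`τ⁻¹ (f Z_τ - f z) - f'(z; d)`. As `Z_τ = z + τ d + τ (a e_τ + δa (y^τ - y))`, the Lipschitz bound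
dominates this integrand by `L ‖a‖ ‖e_τ‖ + L ‖δa‖ ‖y^τ - y‖ + q_τ`, where
`q_τ = ‖τ⁻¹ (f (z + τ d) - f z) - f'(z; d)‖`; the same argument applied to `y^τ - y` gives
`‖y^τ - y‖ = O(τ)`. A Gronwall lemma for `I^γ`, proved in an exponentially weighted sup-norm, then
bounds `sup ‖e_τ‖` by `O(τ) + sup_t I^γ q_τ (t)`. Finally `q_τ → 0` pointwise and boundedly, so
`∫ q_τ → 0` by dominated convergence; splitting `I^γ q_τ (t)` at distance `h` from the
singularity of the kernel `(t - s)^(γ-1)`, which is decreasing for `γ ≤ 1`, makes the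
convergence uniform in `t`.
-/

open scoped NNReal

section MemLpTop

variable {α E F : Type*} [MeasurableSpace α] {μ : Measure α}
  [NormedAddCommGroup E] [NormedAddCommGroup F]

lemma memLp_top_restrict_of_forall_norm_le {s : Set α} (hs : MeasurableSet s) {u : α → E}
    (hu : AEStronglyMeasurable u (μ.restrict s)) {C : ℝ} (hC : ∀ x ∈ s, ‖u x‖ ≤ C) :
    MemLp u ⊤ (μ.restrict s) :=
  memLp_top_of_bound hu C (ae_restrict_of_forall_mem hs hC)

lemma memLp_top_of_continuousOn {T : ℝ} {u : ℝ → E} (hu : ContinuousOn u (Icc 0 T)) :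
    MemLp u ⊤ (volume.restrict (Ioc 0 T)) := by
  obtain ⟨M, hM⟩ := isCompact_Icc.exists_bound_of_continuousOn hu
  exact memLp_top_restrict_of_forall_norm_le measurableSet_Ioc
    ((hu.aestronglyMeasurable measurableSet_Icc).mono_measure
      (Measure.restrict_mono Ioc_subset_Icc_self le_rfl)) fun s hs => hM s (Ioc_subset_Icc_self hs)

lemma LipschitzWith.memLp_top_comp {K : ℝ≥0} {f : E → F} (hf : LipschitzWith K f) {u : α → E}
    (hu : MemLp u ⊤ μ) : MemLp (fun s => f (u s)) ⊤ μ := by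
  refine ((memLp_top_const ‖f 0‖).add (hu.norm.const_mul K)).of_le
    (hf.continuous.comp_aestronglyMeasurable hu.1) (ae_of_all _ fun s => ?_)
  have h := hf.norm_sub_le (u s) 0
  rw [sub_zero] at h
  exact (norm_le_insert' _ (f 0)).trans ((add_le_add le_rfl h).trans (Real.le_norm_self _))

end MemLpTop

section FracIntegral

variable {E : Type*} [NormedAddCommGroup E] [NormedSpace ℝ E] {γ T t : ℝ}

def fracIntegral (γ : ℝ) (F : ℝ → E) (t : ℝ) : E :=
  ∫ s in (0:ℝ)..t, ((t - s) ^ (γ - 1) / Real.Gamma γ) • F s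

lemma fracKernel_nonneg (hγ : 0 < γ) {s : ℝ} (hs : s ≤ t) :
    0 ≤ (t - s) ^ (γ - 1) / Real.Gamma γ :=
  div_nonneg (Real.rpow_nonneg (sub_nonneg.2 hs) _) (Real.Gamma_pos_of_pos hγ).le

lemma integral_fracKernel (hγ : 0 < γ) (m t : ℝ) :
    ∫ s in m..t, (t - s) ^ (γ - 1) / Real.Gamma γ = (t - m) ^ γ / Real.Gamma (γ + 1) := by
  rw [intervalIntegral.integral_div, intervalIntegral.integral_comp_sub_left (· ^ (γ - 1)),
    sub_self, integral_rpow (Or.inl (by linarith)), sub_add_cancel, Real.zero_rpow hγ.ne',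
    sub_zero, Real.Gamma_add_one hγ.ne', div_div, mul_comm]

lemma intervalIntegrable_fracKernel (hγ : 0 < γ) (m t : ℝ) :
    IntervalIntegrable (fun s => (t - s) ^ (γ - 1) / Real.Gamma γ) volume m t := by
  simpa using ((intervalIntegral.intervalIntegrable_rpow' (a := t - m) (b := 0)
    (by linarith : -1 < γ - 1)).comp_sub_left t).div_const (Real.Gamma γ)

lemma intervalIntegrable_fracKernel_smul (hγ : 0 < γ) {F : ℝ → E}
    (hF : MemLp F ⊤ (volume.restrict (Ioc 0 T))) (ht : t ∈ Icc 0 T) :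
    IntervalIntegrable (fun s => ((t - s) ^ (γ - 1) / Real.Gamma γ) • F s) volume 0 t := by
  have hk := intervalIntegrable_fracKernel hγ 0 t
  rw [intervalIntegrable_iff_integrableOn_Ioc_of_le ht.1] at hk ⊢
  exact hk.smul_of_top_left
    (hF.mono_measure (Measure.restrict_mono (Ioc_subset_Ioc_right ht.2) le_rfl))

lemma fracIntegral_sub (hγ : 0 < γ) {F G : ℝ → E} (hF : MemLp F ⊤ (volume.restrict (Ioc 0 T)))
    (hG : MemLp G ⊤ (volume.restrict (Ioc 0 T))) (ht : t ∈ Icc 0 T) :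
    fracIntegral γ F t - fracIntegral γ G t = fracIntegral γ (fun s => F s - G s) t := by
  simp only [fracIntegral, smul_sub]
  exact (intervalIntegral.integral_sub (intervalIntegrable_fracKernel_smul hγ hF ht)
    (intervalIntegrable_fracKernel_smul hγ hG ht)).symm

lemma fracIntegral_add (hγ : 0 < γ) {F G : ℝ → E} (hF : MemLp F ⊤ (volume.restrict (Ioc 0 T)))
    (hG : MemLp G ⊤ (volume.restrict (Ioc 0 T))) (ht : t ∈ Icc 0 T) :
    fracIntegral γ (fun s => F s + G s) t = fracIntegral γ F t + fracIntegral γ G t := by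
  simp only [fracIntegral, smul_add]
  exact intervalIntegral.integral_add (intervalIntegrable_fracKernel_smul hγ hF ht)
    (intervalIntegrable_fracKernel_smul hγ hG ht)

lemma fracIntegral_smul (c : ℝ) (F : ℝ → E) :
    fracIntegral γ (fun s => c • F s) t = c • fracIntegral γ F t := by
  simp only [fracIntegral, smul_comm _ c, intervalIntegral.integral_smul]

lemma norm_fracIntegral_le (hγ : 0 < γ) {F : ℝ → E} {g : ℝ → ℝ}
    (hg : MemLp g ⊤ (volume.restrict (Ioc 0 T))) (ht : t ∈ Icc 0 T)
    (hFg : ∀ s ∈ Ioc 0 t, ‖F s‖ ≤ g s) : ‖fracIntegral γ F t‖ ≤ fracIntegral γ g t := by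
  refine intervalIntegral.norm_integral_le_of_norm_le ht.1 (ae_of_all _ fun s hs => ?_)
    (intervalIntegrable_fracKernel_smul hγ hg ht)
  rw [norm_smul, Real.norm_of_nonneg (fracKernel_nonneg hγ hs.2), smul_eq_mul]
  exact mul_le_mul_of_nonneg_left (hFg s hs) (fracKernel_nonneg hγ hs.2)

lemma fracIntegral_mono (hγ : 0 < γ) {u v : ℝ → ℝ} (hu : MemLp u ⊤ (volume.restrict (Ioc 0 T)))
    (hv : MemLp v ⊤ (volume.restrict (Ioc 0 T))) (ht : t ∈ Icc 0 T)
    (huv : ∀ s ∈ Ioc 0 t, u s ≤ v s) : fracIntegral γ u t ≤ fracIntegral γ v t :=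
  intervalIntegral.integral_mono_on_of_le_Ioo ht.1 (intervalIntegrable_fracKernel_smul hγ hu ht)
    (intervalIntegrable_fracKernel_smul hγ hv ht) fun s hs =>
      mul_le_mul_of_nonneg_left (huv s (Ioo_subset_Ioc_self hs)) (fracKernel_nonneg hγ hs.2.le)

lemma fracIntegral_const (hγ : 0 < γ) (c : ℝ) :
    fracIntegral γ (fun _ => c) t = t ^ γ / Real.Gamma (γ + 1) * c := by
  rw [fracIntegral, intervalIntegral.integral_smul_const, integral_fracKernel hγ, sub_zero,
    smul_eq_mul]

lemma fracIntegral_exp_le (hγ : 0 < γ) {lam : ℝ} (hlam : 0 < lam) (ht : 0 ≤ t) :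
    fracIntegral γ (fun s => Real.exp (lam * s)) t ≤ Real.exp (lam * t) / lam ^ γ := by
  have hsub : fracIntegral γ (fun s => Real.exp (lam * s)) t = Real.exp (lam * t) / Real.Gamma γ *
      ∫ x in (0:ℝ)..t, x ^ (γ - 1) * Real.exp (-(lam * x)) := by
    have h := intervalIntegral.integral_comp_sub_left (a := 0) (b := t)
      (fun x => Real.exp (lam * t) / Real.Gamma γ * (x ^ (γ - 1) * Real.exp (-(lam * x)))) t
    rw [sub_self, sub_zero] at h
    rw [← intervalIntegral.integral_const_mul, fracIntegral, ← h]
    congr 1 with s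
    rw [smul_eq_mul, show lam * s = lam * t + -(lam * (t - s)) by ring, Real.exp_add]
    ring
  have hint : IntegrableOn (fun x => x ^ (γ - 1) * Real.exp (-(lam * x))) (Ioi 0) := by
    simpa [Real.rpow_one] using
      integrableOn_rpow_mul_exp_neg_mul_rpow (by linarith : -1 < γ - 1) one_pos hlam
  have hle : ∫ x in (0:ℝ)..t, x ^ (γ - 1) * Real.exp (-(lam * x)) ≤ Real.Gamma γ / lam ^ γ := by
    calc ∫ x in (0:ℝ)..t, x ^ (γ - 1) * Real.exp (-(lam * x))
        ≤ ∫ x in Ioi 0, x ^ (γ - 1) * Real.exp (-(lam * x)) := by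
          rw [intervalIntegral.integral_of_le ht]
          refine setIntegral_mono_set hint ?_ Ioc_subset_Ioi_self.eventuallyLE
          exact ae_restrict_of_forall_mem measurableSet_Ioi fun x hx =>
            mul_nonneg (Real.rpow_nonneg (le_of_lt hx) _) (Real.exp_pos _).le
      _ = Real.Gamma γ / lam ^ γ := by
          rw [Real.integral_rpow_mul_exp_neg_mul_Ioi hγ hlam, one_div, Real.inv_rpow hlam.le,
            inv_mul_eq_div]
  have hΓ := Real.Gamma_pos_of_pos hγ
  calc _ = _ := hsub
    _ ≤ Real.exp (lam * t) / Real.Gamma γ * (Real.Gamma γ / lam ^ γ) :=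
        mul_le_mul_of_nonneg_left hle (by positivity)
    _ = Real.exp (lam * t) / lam ^ γ := by field_simp

end FracIntegral

section FracGronwall

variable {E : Type*} [NormedAddCommGroup E] [NormedSpace ℝ E] {γ T c : ℝ}

/-- With `λ = (2c)^{1/γ} + 1` one has `c / λ ^ γ ≤ 1 / 2`, so in the weighted sup-norm
`sup_t e^{-λt} |u t|` the fractional integral term is absorbed by the left-hand side. -/
def fracGronwallConst (γ c T : ℝ) : ℝ := 2 * Real.exp (((2 * c) ^ γ⁻¹ + 1) * T)

lemma fracGronwallConst_nonneg : 0 ≤ fracGronwallConst γ c T := by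
  unfold fracGronwallConst; positivity

lemma fracIntegral_le_of_le_mul_exp (hγ : 0 < γ) {lam W t : ℝ} (hlam : 0 < lam) (hW : 0 ≤ W)
    {u : ℝ → ℝ} (hu : ContinuousOn u (Icc 0 T)) (huW : ∀ s ∈ Icc 0 T, u s ≤ W * Real.exp (lam * s))
    (ht : t ∈ Icc 0 T) : fracIntegral γ u t ≤ W * (Real.exp (lam * t) / lam ^ γ) :=
  calc fracIntegral γ u t ≤ fracIntegral γ (fun s => W • Real.exp (lam * s)) t :=
        fracIntegral_mono hγ (memLp_top_of_continuousOn hu)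
          (memLp_top_of_continuousOn (by fun_prop)) ht fun s hs =>
            huW s ⟨hs.1.le, hs.2.trans ht.2⟩
    _ = W * fracIntegral γ (fun s => Real.exp (lam * s)) t := fracIntegral_smul _ _
    _ ≤ W * (Real.exp (lam * t) / lam ^ γ) :=
        mul_le_mul_of_nonneg_left (fracIntegral_exp_le hγ hlam ht.1) hW

lemma le_fracGronwallConst_mul (hγ : 0 < γ) (hc : 0 ≤ c) {g : ℝ} {u : ℝ → ℝ}
    (hu : ContinuousOn u (Icc 0 T)) (hu0 : ∀ t ∈ Icc 0 T, 0 ≤ u t)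
    (hle : ∀ t ∈ Icc 0 T, u t ≤ g + c * fracIntegral γ u t) :
    ∀ t ∈ Icc 0 T, u t ≤ fracGronwallConst γ c T * g := by
  intro t ht
  have hg : 0 ≤ g := by
    have h0 : (0:ℝ) ∈ Icc 0 T := ⟨le_rfl, ht.1.trans ht.2⟩
    simpa [fracIntegral] using (hu0 0 h0).trans (hle 0 h0)
  set lam := (2 * c) ^ γ⁻¹ + 1
  have hlam : 0 < lam := by positivity
  have hlamγ : 2 * c ≤ lam ^ γ :=
    calc 2 * c = ((2 * c) ^ γ⁻¹) ^ γ := (Real.rpow_inv_rpow (by positivity) hγ.ne').symm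
      _ ≤ lam ^ γ := Real.rpow_le_rpow (by positivity) (by linarith) hγ.le
  obtain ⟨t₀, ht₀, hmax⟩ := isCompact_Icc.exists_isMaxOn ⟨t, ht⟩
    ((Real.continuous_exp.comp_continuousOn (continuousOn_const.mul continuousOn_id)).mul hu :
      ContinuousOn (fun s => Real.exp (-lam * s) * u s) (Icc 0 T))
  set W := Real.exp (-lam * t₀) * u t₀
  have hW0 : 0 ≤ W := mul_nonneg (Real.exp_pos _).le (hu0 t₀ ht₀)
  have huW : ∀ s ∈ Icc 0 T, u s ≤ W * Real.exp (lam * s) := fun s hs =>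
    calc u s = Real.exp (-lam * s) * u s * Real.exp (lam * s) := by
          rw [mul_comm, ← mul_assoc, ← Real.exp_add, neg_mul, add_neg_cancel, Real.exp_zero,
            one_mul]
      _ ≤ W * Real.exp (lam * s) := mul_le_mul_of_nonneg_right (hmax hs) (Real.exp_pos _).le
  have hint := fracIntegral_le_of_le_mul_exp hγ hlam hW0 hu huW ht₀
  have hW : W ≤ 2 * g := by
    have hdecay : Real.exp (-lam * t₀) ≤ 1 := Real.exp_le_one_iff.2 (by nlinarith [ht₀.1])
    have habsorb : c * (W / lam ^ γ) ≤ W / 2 := by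
      rw [mul_div_assoc', div_le_div_iff₀ (by positivity) two_pos]; nlinarith
    have := calc W ≤ Real.exp (-lam * t₀) * (g + c * (W * (Real.exp (lam * t₀) / lam ^ γ))) :=
          mul_le_mul_of_nonneg_left ((hle t₀ ht₀).trans (by gcongr)) (Real.exp_pos _).le
      _ = Real.exp (-lam * t₀) * g + c * (W / lam ^ γ) := by
          have hee : Real.exp (-lam * t₀) * Real.exp (lam * t₀) = 1 := by
            rw [← Real.exp_add, neg_mul, neg_add_cancel, Real.exp_zero]
          linear_combination (c * W / lam ^ γ) * hee
      _ ≤ g + W / 2 := add_le_add (mul_le_of_le_one_left hg hdecay) habsorb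
    linarith
  calc u t ≤ W * Real.exp (lam * t) := huW t ht
    _ ≤ 2 * g * Real.exp (lam * T) :=
        mul_le_mul hW (Real.exp_le_exp.2 (by nlinarith [ht.2])) (Real.exp_pos _).le (by linarith)
    _ = fracGronwallConst γ c T * g := by unfold fracGronwallConst; ring

lemma norm_le_of_eq_fracIntegral (hγ : 0 < γ) (hc : 0 ≤ c) {w F : ℝ → E} {r : ℝ → ℝ} {ρ : ℝ}
    (hw : ContinuousOn w (Icc 0 T)) (hwF : ∀ t ∈ Icc 0 T, w t = fracIntegral γ F t)
    (hr : MemLp r ⊤ (volume.restrict (Ioc 0 T))) (hF : ∀ s ∈ Ioc 0 T, ‖F s‖ ≤ c * ‖w s‖ + r s)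
    (hrρ : ∀ t ∈ Icc 0 T, fracIntegral γ r t ≤ ρ) :
    ∀ t ∈ Icc 0 T, ‖w t‖ ≤ fracGronwallConst γ c T * ρ := by
  have hwL : MemLp (fun s => c • ‖w s‖) ⊤ (volume.restrict (Ioc 0 T)) :=
    (memLp_top_of_continuousOn hw).norm.const_smul c
  refine le_fracGronwallConst_mul hγ hc hw.norm (fun _ _ => norm_nonneg _) fun t ht => ?_
  calc ‖w t‖ = ‖fracIntegral γ F t‖ := by rw [hwF t ht]
    _ ≤ fracIntegral γ (fun s => c • ‖w s‖ + r s) t :=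
        norm_fracIntegral_le hγ (hwL.add hr) ht fun s hs => hF s ⟨hs.1, hs.2.trans ht.2⟩
    _ = c * fracIntegral γ (fun s => ‖w s‖) t + fracIntegral γ r t := by
        rw [fracIntegral_add hγ hwL hr ht, fracIntegral_smul, smul_eq_mul]
    _ ≤ ρ + c * fracIntegral γ (fun s => ‖w s‖) t := by linarith [hrρ t ht]

end FracGronwall

section FracIntegralConvergence

variable {γ T t : ℝ}

lemma integral_fracKernel_smul_le_of_le_sub (hγ : 0 < γ) (hγ1 : γ ≤ 1) {r : ℝ → ℝ} {h m : ℝ}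
    (hh : 0 < h) (hm0 : 0 ≤ m) (hmT : m ≤ T) (hr : IntegrableOn r (Ioc 0 T))
    (hr0 : ∀ s ∈ Ioc 0 T, 0 ≤ r s) (hmh : ∀ s ∈ Ioo 0 m, h ≤ t - s)
    (hk : IntervalIntegrable (fun s => ((t - s) ^ (γ - 1) / Real.Gamma γ) • r s) volume 0 m) :
    ∫ s in (0:ℝ)..m, ((t - s) ^ (γ - 1) / Real.Gamma γ) • r s ≤
      h ^ (γ - 1) / Real.Gamma γ * ∫ s in Ioc 0 T, r s := by
  have hΓ := Real.Gamma_pos_of_pos hγ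
  have hrm : IntervalIntegrable r volume 0 m :=
    (intervalIntegrable_iff_integrableOn_Ioc_of_le hm0).2 (hr.mono_set (Ioc_subset_Ioc_right hmT))
  calc _ ≤ ∫ s in (0:ℝ)..m, h ^ (γ - 1) / Real.Gamma γ * r s :=
        intervalIntegral.integral_mono_on_of_le_Ioo hm0 hk (hrm.const_mul _) fun s hs =>
          mul_le_mul_of_nonneg_right (div_le_div_of_nonneg_right
            (Real.rpow_le_rpow_of_nonpos hh (hmh s hs) (by linarith)) hΓ.le)
            (hr0 s ⟨hs.1, hs.2.le.trans hmT⟩)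
    _ ≤ h ^ (γ - 1) / Real.Gamma γ * ∫ s in Ioc 0 T, r s := by
        rw [intervalIntegral.integral_const_mul, intervalIntegral.integral_of_le hm0]
        exact mul_le_mul_of_nonneg_left (setIntegral_mono_set hr
          (ae_restrict_of_forall_mem measurableSet_Ioc hr0) (Ioc_subset_Ioc_right hmT).eventuallyLE)
          (div_nonneg (Real.rpow_nonneg hh.le _) hΓ.le)

lemma integral_fracKernel_smul_le (hγ : 0 < γ) {r : ℝ → ℝ} {R m : ℝ} (hmt : m ≤ t)
    (hrR : ∀ s ∈ Ioo m t, r s ≤ R)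
    (hk : IntervalIntegrable (fun s => ((t - s) ^ (γ - 1) / Real.Gamma γ) • r s) volume m t) :
    ∫ s in m..t, ((t - s) ^ (γ - 1) / Real.Gamma γ) • r s ≤
      (t - m) ^ γ / Real.Gamma (γ + 1) * R := by
  rw [← integral_fracKernel hγ, ← intervalIntegral.integral_mul_const]
  exact intervalIntegral.integral_mono_on_of_le_Ioo hmt hk
    ((intervalIntegrable_fracKernel hγ m t).mul_const R) fun s hs =>
      mul_le_mul_of_nonneg_left (hrR s hs) (fracKernel_nonneg hγ hs.2.le)

lemma fracIntegral_le_of_bound (hγ : 0 < γ) (hγ1 : γ ≤ 1) {r : ℝ → ℝ} {R h : ℝ} (hR : 0 ≤ R)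
    (hh : 0 < h) (hr : AEStronglyMeasurable r (volume.restrict (Ioc 0 T)))
    (hr0 : ∀ s ∈ Ioc 0 T, 0 ≤ r s) (hrR : ∀ s ∈ Ioc 0 T, r s ≤ R) (ht : t ∈ Icc 0 T) :
    fracIntegral γ r t ≤
      h ^ (γ - 1) / Real.Gamma γ * (∫ s in Ioc 0 T, r s) + h ^ γ / Real.Gamma (γ + 1) * R := by
  have hrL : MemLp r ⊤ (volume.restrict (Ioc 0 T)) :=
    memLp_top_restrict_of_forall_norm_le measurableSet_Ioc hr fun s hs => by
      rw [Real.norm_of_nonneg (hr0 s hs)]; exact hrR s hs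
  set m := max (t - h) 0
  have hm0 : 0 ≤ m := le_max_right _ _
  have hmt : m ≤ t := max_le (by linarith) ht.1
  have hk := intervalIntegrable_fracKernel_smul hγ hrL ht
  have hk₁ := hk.mono_set (uIcc_subset_uIcc left_mem_uIcc (mem_uIcc_of_le hm0 hmt))
  have hk₂ := hk.mono_set (uIcc_subset_uIcc (mem_uIcc_of_le hm0 hmt) right_mem_uIcc)
  rw [fracIntegral, ← intervalIntegral.integral_add_adjacent_intervals hk₁ hk₂]
  refine add_le_add (integral_fracKernel_smul_le_of_le_sub hγ hγ1 hh hm0 (hmt.trans ht.2)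
    (hrL.integrable le_top) hr0 (fun s hs => ?_) hk₁) ((integral_fracKernel_smul_le hγ hmt
      (fun s hs => hrR s ⟨hm0.trans_lt hs.1, hs.2.le.trans ht.2⟩) hk₂).trans ?_)
  · have := (lt_max_iff.1 hs.2).resolve_right (not_lt.2 hs.1.le)
    linarith
  · gcongr
    linarith [le_max_left (t - h) 0]

lemma eventually_forall_fracIntegral_le (hγ : 0 < γ) (hγ1 : γ ≤ 1) {ι : Type*} {l : Filter ι}
    [l.IsCountablyGenerated] {q : ι → ℝ → ℝ} {R : ℝ} (hR : 0 ≤ R)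
    (hq : ∀ i, AEStronglyMeasurable (q i) (volume.restrict (Ioc 0 T)))
    (hq0 : ∀ i, ∀ s ∈ Ioc 0 T, 0 ≤ q i s) (hqR : ∀ i, ∀ s ∈ Ioc 0 T, q i s ≤ R)
    (hlim : ∀ s ∈ Ioc 0 T, Tendsto (fun i => q i s) l (𝓝 0)) {η : ℝ} (hη : 0 < η) :
    ∀ᶠ i in l, ∀ t ∈ Icc 0 T, fracIntegral γ (q i) t ≤ η := by
  have hsmall : Tendsto (fun h : ℝ => h ^ γ / Real.Gamma (γ + 1) * R) (𝓝[>] 0) (𝓝 0) := by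
    have := (((Real.continuous_rpow_const hγ.le).tendsto 0).div_const
      (Real.Gamma (γ + 1))).mul_const R
    rw [Real.zero_rpow hγ.ne', zero_div, zero_mul] at this
    exact this.mono_left nhdsWithin_le_nhds
  obtain ⟨h, hhR, hh⟩ := ((hsmall.eventually (gt_mem_nhds (half_pos hη))).and
    self_mem_nhdsWithin).exists
  have hDC : Tendsto (fun i => h ^ (γ - 1) / Real.Gamma γ * ∫ s in Ioc 0 T, q i s) l (𝓝 0) := by
    have := tendsto_integral_filter_of_dominated_convergence (fun _ => R)
      (Eventually.of_forall hq) (Eventually.of_forall fun i =>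
        ae_restrict_of_forall_mem measurableSet_Ioc fun s hs => by
          rw [Real.norm_of_nonneg (hq0 i s hs)]; exact hqR i s hs)
      (integrableOn_const (by simp)) (ae_restrict_of_forall_mem measurableSet_Ioc hlim)
    simpa using this.const_mul (h ^ (γ - 1) / Real.Gamma γ)
  filter_upwards [hDC.eventually (gt_mem_nhds (half_pos hη))] with i hi t ht
  linarith [fracIntegral_le_of_bound hγ hγ1 hR hh (hq i) (hq0 i) (hqR i) ht]

end FracIntegralConvergence

section DirDeriv

variable {E F : Type*} [NormedAddCommGroup E] [NormedSpace ℝ E] [NormedAddCommGroup F]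
  [NormedSpace ℝ F] {f : E → F} {K : ℝ≥0}

lemma LipschitzWith.norm_slope_le (hf : LipschitzWith K f) (z d : E) (τ : ℝ) :
    ‖τ⁻¹ • (f (z + τ • d) - f z)‖ ≤ K * ‖d‖ := by
  rcases eq_or_ne τ 0 with rfl | hτ
  · simp only [inv_zero, zero_smul, norm_zero]; positivity
  calc ‖τ⁻¹ • (f (z + τ • d) - f z)‖ ≤ ‖τ⁻¹‖ * (K * ‖τ • d‖) := by
        rw [norm_smul]; gcongr; simpa using hf.norm_sub_le (z + τ • d) z
    _ = K * ‖d‖ := by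
        rw [norm_smul, norm_inv]; field_simp [norm_ne_zero_iff.2 hτ]

lemma LipschitzWith.norm_le_of_tendsto_slope (hf : LipschitzWith K f) {z d : E} {v : F}
    (hv : Tendsto (fun τ : ℝ => τ⁻¹ • (f (z + τ • d) - f z)) (𝓝[>] 0) (𝓝 v)) :
    ‖v‖ ≤ K * ‖d‖ :=
  le_of_tendsto' hv.norm fun τ => hf.norm_slope_le z d τ

lemma aestronglyMeasurable_of_tendsto_slope {α : Type*} [MeasurableSpace α] {μ : Measure α}
    (hf : Continuous f) {f' : E → E → F}
    (hf' : ∀ z d, Tendsto (fun τ : ℝ => τ⁻¹ • (f (z + τ • d) - f z)) (𝓝[>] 0) (𝓝 (f' z d)))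
    {z d : α → E} (hz : AEStronglyMeasurable z μ) (hd : AEStronglyMeasurable d μ) :
    AEStronglyMeasurable (fun s => f' (z s) (d s)) μ := by
  have hseq : Tendsto (fun k : ℕ => 1 / ((k : ℝ) + 1)) atTop (𝓝[>] 0) :=
    tendsto_nhdsWithin_of_tendsto_nhds_of_eventually_within _
      tendsto_one_div_add_atTop_nhds_zero_nat
      (Eventually.of_forall fun k => by simp only [mem_Ioi]; positivity)
  refine aestronglyMeasurable_of_tendsto_ae atTop (fun k => ?_)
    (ae_of_all _ fun s => (hf' (z s) (d s)).comp hseq)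
  exact ((hf.comp_aestronglyMeasurable (hz.add (hd.const_smul _))).sub
    (hf.comp_aestronglyMeasurable hz)).const_smul _

lemma LipschitzWith.norm_slope_add_smul_sub_le (hf : LipschitzWith K f) (z d e : E) (τ : ℝ)
    (v : F) : ‖τ⁻¹ • (f (z + τ • d + τ • e) - f z) - v‖ ≤
      K * ‖e‖ + ‖τ⁻¹ • (f (z + τ • d) - f z) - v‖ :=
  calc _ = ‖τ⁻¹ • (f (z + τ • d + τ • e) - f (z + τ • d)) +
        (τ⁻¹ • (f (z + τ • d) - f z) - v)‖ := by
        congr 1; simp only [smul_sub]; abel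
    _ ≤ _ := (norm_add_le _ _).trans (add_le_add (hf.norm_slope_le _ _ _) le_rfl)

lemma LipschitzWith.memLp_top_of_tendsto_slope {α : Type*} [MeasurableSpace α] {μ : Measure α}
    (hf : LipschitzWith K f) {f' : E → E → F}
    (hf' : ∀ z d, Tendsto (fun τ : ℝ => τ⁻¹ • (f (z + τ • d) - f z)) (𝓝[>] 0) (𝓝 (f' z d)))
    {z d : α → E} (hz : AEStronglyMeasurable z μ) (hd : MemLp d ⊤ μ) :
    MemLp (fun s => f' (z s) (d s)) ⊤ μ :=
  hd.of_le_mul (aestronglyMeasurable_of_tendsto_slope hf.continuous hf' hz hd.1)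
    (ae_of_all _ fun _ => hf.norm_le_of_tendsto_slope (hf' _ _))

lemma eventually_forall_fracIntegral_norm_slope_sub_le {γ T : ℝ} (hγ : 0 < γ) (hγ1 : γ ≤ 1)
    (hf : LipschitzWith K f) {f' : E → E → F}
    (hf' : ∀ z d, Tendsto (fun τ : ℝ => τ⁻¹ • (f (z + τ • d) - f z)) (𝓝[>] 0) (𝓝 (f' z d)))
    {z d : ℝ → E} (hz : AEStronglyMeasurable z (volume.restrict (Ioc 0 T)))
    (hd : AEStronglyMeasurable d (volume.restrict (Ioc 0 T))) {R : ℝ} (hR : 0 ≤ R)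
    (hdR : ∀ s ∈ Ioc 0 T, ‖d s‖ ≤ R) {η : ℝ} (hη : 0 < η) :
    ∀ᶠ τ in 𝓝[>] (0:ℝ), ∀ t ∈ Icc 0 T,
      fracIntegral γ (fun s => ‖τ⁻¹ • (f (z s + τ • d s) - f (z s)) - f' (z s) (d s)‖) t ≤ η := by
  refine eventually_forall_fracIntegral_le hγ hγ1 (R := 2 * K * R) (by positivity)
    (fun τ => ?_) (fun _ _ _ => norm_nonneg _) (fun τ s hs => ?_) (fun s _ => ?_) hη
  · exact ((((hf.continuous.comp_aestronglyMeasurable (hz.add (hd.const_smul τ))).sub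
      (hf.continuous.comp_aestronglyMeasurable hz)).const_smul τ⁻¹).sub
      (aestronglyMeasurable_of_tendsto_slope hf.continuous hf' hz hd)).norm
  · calc _ ≤ K * ‖d s‖ + K * ‖d s‖ := (norm_sub_le _ _).trans
          (add_le_add (hf.norm_slope_le _ _ _) (hf.norm_le_of_tendsto_slope (hf' _ _)))
      _ ≤ 2 * K * R := by nlinarith [hdR s hs, K.2]
  · simpa using ((hf' (z s) (d s)).sub_const (f' (z s) (d s))).norm

end DirDeriv

section MatVec

variable {n : ℕ}

lemma mv_add_left (A B : Mat n) (x : Vec n) : mv (A + B) x = mv A x + mv B x := by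
  ext i; simp [mv, add_mul, Finset.sum_add_distrib]

lemma mv_sub_left (A B : Mat n) (x : Vec n) : mv (A - B) x = mv A x - mv B x := by
  ext i; simp [mv, sub_mul, Finset.sum_sub_distrib]

lemma mv_smul_left (c : ℝ) (A : Mat n) (x : Vec n) : mv (c • A) x = c • mv A x := by
  ext i; simp [mv, Finset.mul_sum, mul_assoc]

lemma mv_sub_right (A : Mat n) (x y : Vec n) : mv A (x - y) = mv A x - mv A y := by
  ext i; simp [mv, mul_sub, Finset.sum_sub_distrib]

lemma mv_smul_right (c : ℝ) (A : Mat n) (x : Vec n) : mv A (c • x) = c • mv A x := by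
  ext i; simp [mv, Finset.mul_sum, mul_left_comm]

lemma norm_mv_le (A : Mat n) (x : Vec n) : ‖mv A x‖ ≤ ‖A‖ * ‖x‖ := by
  rw [← pow_le_pow_iff_left₀ (norm_nonneg _) (by positivity) two_ne_zero, mul_pow,
    EuclideanSpace.norm_sq_eq, EuclideanSpace.norm_sq_eq, EuclideanSpace.norm_sq_eq,
    Fintype.sum_prod_type, Finset.sum_mul]
  refine Finset.sum_le_sum fun i _ => ?_
  simpa [mv, Real.norm_eq_abs, sq_abs] using
    Finset.sum_mul_sq_le_sq_mul_sq Finset.univ (fun j => A (i, j)) x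

lemma continuous_mv : Continuous fun p : Mat n × Vec n => mv p.1 p.2 := by
  refine (PiLp.continuous_toLp 2 _).comp (continuous_pi fun i => ?_)
  fun_prop

lemma MeasureTheory.MemLp.mv {α : Type*} [MeasurableSpace α] {μ : Measure α} {A : α → Mat n}
    {x : α → Vec n} (hA : MemLp A ⊤ μ)
    (hx : MemLp x ⊤ μ) : MemLp (fun s => mv (A s) (x s)) ⊤ μ :=
  hA.of_bilin _root_.mv 1 hx (continuous_mv.comp_aestronglyMeasurable (hA.1.prodMk hx.1))
    (ae_of_all _ fun s => by rw [one_mul, ← NNReal.coe_le_coe]; exact norm_mv_le _ _)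

end MatVec

section MildSolution

variable {n : ℕ} {γ T C : ℝ} {y₀ : Vec n} {f : Vec n → Vec n} {f' : Vec n → Vec n → Vec n}
  {K : ℝ≥0} {a a' δa : ℝ → Mat n} {ℓ ℓ' δℓ : ℝ → Vec n} {y y' δy : ℝ → Vec n}
  {Y : ℝ → ℝ → Vec n}

lemma memLp_top_mv_add (hy : ContinuousOn y (Icc 0 T))
    (ha : MemLp a ⊤ (volume.restrict (Ioc 0 T))) (hℓ : MemLp ℓ ⊤ (volume.restrict (Ioc 0 T))) :
    MemLp (fun s => mv (a s) (y s) + ℓ s) ⊤ (volume.restrict (Ioc 0 T)) :=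
  (ha.mv (memLp_top_of_continuousOn hy)).add hℓ

lemma memLp_top_mv_add_mv_add (hy : ContinuousOn y (Icc 0 T)) (hδy : ContinuousOn δy (Icc 0 T))
    (ha : MemLp a ⊤ (volume.restrict (Ioc 0 T))) (hδa : MemLp δa ⊤ (volume.restrict (Ioc 0 T)))
    (hδℓ : MemLp δℓ ⊤ (volume.restrict (Ioc 0 T))) :
    MemLp (fun s => mv (a s) (δy s) + mv (δa s) (y s) + δℓ s) ⊤ (volume.restrict (Ioc 0 T)) :=
  ((ha.mv (memLp_top_of_continuousOn hδy)).add (hδa.mv (memLp_top_of_continuousOn hy))).add hδℓ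

lemma exists_forall_norm_mv_add_mv_add_le (hT : 0 < T) (hy : ContinuousOn y (Icc 0 T))
    (hδy : ContinuousOn δy (Icc 0 T)) (haC : ∀ s ∈ Ioc 0 T, ‖a s‖ ≤ C)
    (hδaC : ∀ s ∈ Ioc 0 T, ‖δa s‖ ≤ C) (hδℓC : ∀ s ∈ Ioc 0 T, ‖δℓ s‖ ≤ C) :
    ∃ R, 0 ≤ R ∧ ∀ s ∈ Ioc 0 T, ‖mv (a s) (δy s) + mv (δa s) (y s) + δℓ s‖ ≤ R := by
  have hC : 0 ≤ C := (norm_nonneg _).trans (haC T ⟨hT, le_rfl⟩)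
  obtain ⟨My, hMy⟩ := isCompact_Icc.exists_bound_of_continuousOn hy
  obtain ⟨Mδy, hMδy⟩ := isCompact_Icc.exists_bound_of_continuousOn hδy
  have hbound : ∀ s ∈ Ioc 0 T,
      ‖mv (a s) (δy s) + mv (δa s) (y s) + δℓ s‖ ≤ C * Mδy + C * My + C := fun s hs =>
    calc _ ≤ ‖mv (a s) (δy s)‖ + ‖mv (δa s) (y s)‖ + ‖δℓ s‖ := norm_add₃_le
      _ ≤ ‖a s‖ * ‖δy s‖ + ‖δa s‖ * ‖y s‖ + ‖δℓ s‖ := by gcongr <;> exact norm_mv_le _ _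
      _ ≤ C * Mδy + C * My + C := by
          gcongr
          exacts [haC s hs, hMδy s (Ioc_subset_Icc_self hs), hδaC s hs,
            hMy s (Ioc_subset_Icc_self hs), hδℓC s hs]
  exact ⟨_, (norm_nonneg _).trans (hbound T ⟨hT, le_rfl⟩), hbound⟩

lemma IsMildSolution.sub_eq_fracIntegral (hγ : 0 < γ) (hf : LipschitzWith K f)
    (hy : IsMildSolution γ T y₀ f a ℓ y) (hy' : IsMildSolution γ T y₀ f a' ℓ' y')
    (ha : MemLp a ⊤ (volume.restrict (Ioc 0 T))) (hℓ : MemLp ℓ ⊤ (volume.restrict (Ioc 0 T)))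
    (ha' : MemLp a' ⊤ (volume.restrict (Ioc 0 T))) (hℓ' : MemLp ℓ' ⊤ (volume.restrict (Ioc 0 T)))
    {t : ℝ} (ht : t ∈ Icc 0 T) :
    y' t - y t =
      fracIntegral γ (fun s => f (mv (a' s) (y' s) + ℓ' s) - f (mv (a s) (y s) + ℓ s)) t := by
  rw [hy'.2 t ht, hy.2 t ht, add_sub_add_left_eq_sub]
  exact fracIntegral_sub hγ (hf.memLp_top_comp (memLp_top_mv_add hy'.1 ha' hℓ'))
    (hf.memLp_top_comp (memLp_top_mv_add hy.1 ha hℓ)) ht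

lemma IsMildSolution.norm_sub_le (hγ : 0 < γ) (hf : LipschitzWith K f)
    (hy : IsMildSolution γ T y₀ f a ℓ y) (hy' : IsMildSolution γ T y₀ f a' ℓ' y')
    (ha : MemLp a ⊤ (volume.restrict (Ioc 0 T))) (hℓ : MemLp ℓ ⊤ (volume.restrict (Ioc 0 T)))
    (ha' : MemLp a' ⊤ (volume.restrict (Ioc 0 T))) (hℓ' : MemLp ℓ' ⊤ (volume.restrict (Ioc 0 T)))
    {δ : ℝ} (hC : 0 ≤ C) (ha'C : ∀ s ∈ Ioc 0 T, ‖a' s‖ ≤ C) (hδ : 0 ≤ δ)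
    (hδ_bound : ∀ s ∈ Ioc 0 T, ‖a' s - a s‖ * ‖y s‖ + ‖ℓ' s - ℓ s‖ ≤ δ) :
    ∀ t ∈ Icc 0 T,
      ‖y' t - y t‖ ≤ fracGronwallConst γ (K * C) T * (T ^ γ / Real.Gamma (γ + 1) * (K * δ)) := by
  refine norm_le_of_eq_fracIntegral hγ (by positivity) (hy'.1.sub hy.1)
    (fun t ht => hy.sub_eq_fracIntegral hγ hf hy' ha hℓ ha' hℓ' ht) (memLp_top_const (K * δ))
    (fun s hs => ?_) fun t ht => ?_
  · have hsplit : mv (a' s) (y' s) + ℓ' s - (mv (a s) (y s) + ℓ s) =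
        mv (a' s) (y' s - y s) + (mv (a' s - a s) (y s) + (ℓ' s - ℓ s)) := by
      rw [mv_sub_right, mv_sub_left]; abel
    calc ‖f (mv (a' s) (y' s) + ℓ' s) - f (mv (a s) (y s) + ℓ s)‖
        ≤ K * (‖mv (a' s) (y' s - y s)‖ + (‖mv (a' s - a s) (y s)‖ + ‖ℓ' s - ℓ s‖)) := by
          refine (hf.norm_sub_le _ _).trans (mul_le_mul_of_nonneg_left ?_ K.2)
          rw [hsplit]
          exact (norm_add_le _ _).trans (add_le_add le_rfl (norm_add_le _ _))
      _ ≤ K * (C * ‖y' s - y s‖ + δ) := by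
          gcongr
          · exact (norm_mv_le _ _).trans (mul_le_mul_of_nonneg_right (ha'C s hs) (norm_nonneg _))
          · exact (add_le_add (norm_mv_le _ _) le_rfl).trans (hδ_bound s hs)
      _ = K * C * ‖y' s - y s‖ + K * δ := by ring
  · rw [fracIntegral_const hγ]
    gcongr
    exacts [ht.1, ht.2]

lemma IsMildSolution.exists_norm_perturb_sub_le (hγ : 0 < γ) (hT : 0 < T)
    (hf : LipschitzWith K f) (hy : IsMildSolution γ T y₀ f a ℓ y)
    (hY : ∀ τ ∈ Ioi (0:ℝ),
      IsMildSolution γ T y₀ f (fun s => a s + τ • δa s) (fun s => ℓ s + τ • δℓ s) (Y τ))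
    (ha : MemLp a ⊤ (volume.restrict (Ioc 0 T))) (hℓ : MemLp ℓ ⊤ (volume.restrict (Ioc 0 T)))
    (hδa : MemLp δa ⊤ (volume.restrict (Ioc 0 T))) (hδℓ : MemLp δℓ ⊤ (volume.restrict (Ioc 0 T)))
    (haC : ∀ s ∈ Ioc 0 T, ‖a s‖ ≤ C) (hδaC : ∀ s ∈ Ioc 0 T, ‖δa s‖ ≤ C)
    (hδℓC : ∀ s ∈ Ioc 0 T, ‖δℓ s‖ ≤ C) :
    ∃ M, 0 ≤ M ∧ ∀ τ ∈ Ioc (0:ℝ) 1, ∀ t ∈ Icc 0 T, ‖Y τ t - y t‖ ≤ τ * M := by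
  have hC : 0 ≤ C := (norm_nonneg _).trans (haC T ⟨hT, le_rfl⟩)
  obtain ⟨My, hMy⟩ := isCompact_Icc.exists_bound_of_continuousOn hy.1
  have hMy0 : 0 ≤ My := (norm_nonneg _).trans (hMy T ⟨hT.le, le_rfl⟩)
  have hK := fracGronwallConst_nonneg (γ := γ) (c := K * (2 * C)) (T := T)
  refine ⟨fracGronwallConst γ (K * (2 * C)) T * (T ^ γ / Real.Gamma (γ + 1) * (K * (C * My + C))),
    by positivity, fun τ hτ t ht => ?_⟩
  have hτ0 : 0 ≤ τ := hτ.1.le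
  calc ‖Y τ t - y t‖ ≤ fracGronwallConst γ (K * (2 * C)) T *
        (T ^ γ / Real.Gamma (γ + 1) * (K * (τ * (C * My + C)))) :=
      hy.norm_sub_le hγ hf (hY τ hτ.1) ha hℓ (ha.add (hδa.const_smul τ))
        (hℓ.add (hδℓ.const_smul τ)) (by positivity) (fun s hs => ?_) (by positivity)
        (fun s hs => ?_) t ht
    _ = τ * (fracGronwallConst γ (K * (2 * C)) T *
        (T ^ γ / Real.Gamma (γ + 1) * (K * (C * My + C)))) := by ring
  · refine (norm_add_le _ _).trans ?_
    rw [norm_smul, Real.norm_of_nonneg hτ0]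
    nlinarith [haC s hs, hδaC s hs, hτ.2, norm_nonneg (δa s)]
  · rw [add_sub_cancel_left, add_sub_cancel_left, norm_smul, norm_smul, Real.norm_of_nonneg hτ0]
    rw [mul_assoc, ← mul_add]
    gcongr
    exacts [hδaC s hs, hMy s (Ioc_subset_Icc_self hs), hδℓC s hs]

end MildSolution

section Linearization

variable {n : ℕ} {γ T C : ℝ} {y₀ : Vec n} {f : Vec n → Vec n} {f' : Vec n → Vec n → Vec n}
  {K : ℝ≥0} {a δa : ℝ → Mat n} {ℓ δℓ : ℝ → Vec n} {y δy : ℝ → Vec n}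

lemma mv_add_smul_add_eq {τ : ℝ} (hτ : τ ≠ 0) (A δA : Mat n) (l δl x δx X : Vec n) :
    mv (A + τ • δA) X + (l + τ • δl) =
      mv A x + l + τ • (mv A δx + mv δA x + δl) +
        τ • (mv A (τ⁻¹ • (X - x) - δx) + mv δA (X - x)) := by
  simp only [mv_add_left, mv_smul_left, mv_sub_right, mv_smul_right, smul_add, smul_sub,
    smul_smul, mul_inv_cancel₀ hτ, one_smul]
  abel

lemma IsLinSolution.diffQuot_sub_eq_fracIntegral (hγ : 0 < γ) (hf : LipschitzWith K f)
    (hf' : ∀ z d, Tendsto (fun τ : ℝ => τ⁻¹ • (f (z + τ • d) - f z)) (𝓝[>] 0) (𝓝 (f' z d)))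
    (hy : IsMildSolution γ T y₀ f a ℓ y) (hδy : IsLinSolution γ T f' a ℓ y δa δℓ δy)
    {τ : ℝ} {Y : ℝ → Vec n}
    (hY : IsMildSolution γ T y₀ f (fun s => a s + τ • δa s) (fun s => ℓ s + τ • δℓ s) Y)
    (ha : MemLp a ⊤ (volume.restrict (Ioc 0 T))) (hℓ : MemLp ℓ ⊤ (volume.restrict (Ioc 0 T)))
    (hδa : MemLp δa ⊤ (volume.restrict (Ioc 0 T))) (hδℓ : MemLp δℓ ⊤ (volume.restrict (Ioc 0 T)))
    {t : ℝ} (ht : t ∈ Icc 0 T) :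
    τ⁻¹ • (Y t - y t) - δy t = fracIntegral γ (fun s =>
      τ⁻¹ • (f (mv (a s + τ • δa s) (Y s) + (ℓ s + τ • δℓ s)) - f (mv (a s) (y s) + ℓ s)) -
        f' (mv (a s) (y s) + ℓ s) (mv (a s) (δy s) + mv (δa s) (y s) + δℓ s)) t := by
  have haτ : MemLp (fun s => a s + τ • δa s) ⊤ (volume.restrict (Ioc 0 T)) :=
    ha.add (hδa.const_smul τ)
  have hℓτ : MemLp (fun s => ℓ s + τ • δℓ s) ⊤ (volume.restrict (Ioc 0 T)) :=
    hℓ.add (hδℓ.const_smul τ)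
  rw [hy.sub_eq_fracIntegral hγ hf hY ha hℓ haτ hℓτ ht, hδy.2 t ht, ← fracIntegral_smul]
  exact fracIntegral_sub hγ (((hf.memLp_top_comp (memLp_top_mv_add hY.1 haτ hℓτ)).sub
    (hf.memLp_top_comp (memLp_top_mv_add hy.1 ha hℓ))).const_smul τ⁻¹)
    (hf.memLp_top_of_tendsto_slope hf' (memLp_top_mv_add hy.1 ha hℓ).1
      (memLp_top_mv_add_mv_add hy.1 hδy.1 ha hδa hδℓ)) ht

lemma IsLinSolution.norm_diffQuot_sub_le (hγ : 0 < γ) (hf : LipschitzWith K f)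
    (hf' : ∀ z d, Tendsto (fun τ : ℝ => τ⁻¹ • (f (z + τ • d) - f z)) (𝓝[>] 0) (𝓝 (f' z d)))
    (hy : IsMildSolution γ T y₀ f a ℓ y) (hδy : IsLinSolution γ T f' a ℓ y δa δℓ δy)
    {τ : ℝ} (hτ : 0 < τ) {Y : ℝ → Vec n}
    (hY : IsMildSolution γ T y₀ f (fun s => a s + τ • δa s) (fun s => ℓ s + τ • δℓ s) Y)
    (ha : MemLp a ⊤ (volume.restrict (Ioc 0 T))) (hℓ : MemLp ℓ ⊤ (volume.restrict (Ioc 0 T)))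
    (hδa : MemLp δa ⊤ (volume.restrict (Ioc 0 T))) (hδℓ : MemLp δℓ ⊤ (volume.restrict (Ioc 0 T)))
    {M η : ℝ} (hC : 0 ≤ C) (haC : ∀ s ∈ Ioc 0 T, ‖a s‖ ≤ C) (hM : 0 ≤ M)
    (hM_bound : ∀ s ∈ Ioc 0 T, ‖δa s‖ * ‖Y s - y s‖ ≤ M)
    (hη : ∀ t ∈ Icc 0 T, fracIntegral γ (fun s =>
      ‖τ⁻¹ • (f (mv (a s) (y s) + ℓ s + τ • (mv (a s) (δy s) + mv (δa s) (y s) + δℓ s)) -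
          f (mv (a s) (y s) + ℓ s)) -
        f' (mv (a s) (y s) + ℓ s) (mv (a s) (δy s) + mv (δa s) (y s) + δℓ s)‖) t ≤ η) :
    ∀ t ∈ Icc 0 T, ‖τ⁻¹ • (Y t - y t) - δy t‖ ≤
      fracGronwallConst γ (K * C) T * (T ^ γ / Real.Gamma (γ + 1) * (K * M) + η) := by
  set z := fun s => mv (a s) (y s) + ℓ s
  set d := fun s => mv (a s) (δy s) + mv (δa s) (y s) + δℓ s
  set q := fun s => ‖τ⁻¹ • (f (z s + τ • d s) - f (z s)) - f' (z s) (d s)‖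
  have hzL : MemLp z ⊤ (volume.restrict (Ioc 0 T)) := memLp_top_mv_add hy.1 ha hℓ
  have hdL : MemLp d ⊤ (volume.restrict (Ioc 0 T)) :=
    memLp_top_mv_add_mv_add hy.1 hδy.1 ha hδa hδℓ
  have hqL : MemLp q ⊤ (volume.restrict (Ioc 0 T)) :=
    ((((hf.memLp_top_comp (hzL.add (hdL.const_smul τ))).sub (hf.memLp_top_comp hzL)).const_smul
      τ⁻¹).sub (hf.memLp_top_of_tendsto_slope hf' hzL.1 hdL)).norm
  refine norm_le_of_eq_fracIntegral hγ (by positivity) (r := fun s => K * M + q s)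
    (((hY.1.sub hy.1).const_smul τ⁻¹).sub hδy.1)
    (fun t ht => hδy.diffQuot_sub_eq_fracIntegral hγ hf hf' hy hY ha hℓ hδa hδℓ ht)
    ((memLp_top_const (K * M)).add hqL) (fun s hs => ?_) fun t ht => ?_
  · rw [mv_add_smul_add_eq hτ.ne' _ _ _ _ (y s) (δy s)]
    calc _ ≤ K * ‖mv (a s) (τ⁻¹ • (Y s - y s) - δy s) + mv (δa s) (Y s - y s)‖ + q s :=
          hf.norm_slope_add_smul_sub_le _ _ _ _ _
      _ ≤ K * (C * ‖τ⁻¹ • (Y s - y s) - δy s‖ + M) + q s := by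
          gcongr
          exact (norm_add_le _ _).trans (add_le_add ((norm_mv_le _ _).trans
            (mul_le_mul_of_nonneg_right (haC s hs) (norm_nonneg _)))
            ((norm_mv_le _ _).trans (hM_bound s hs)))
      _ = K * C * ‖τ⁻¹ • (Y s - y s) - δy s‖ + (K * M + q s) := by ring
  · rw [fracIntegral_add hγ (memLp_top_const _) hqL ht, fracIntegral_const hγ]
    gcongr
    exacts [ht.1, ht.2, hη t ht]

lemma IsLinSolution.eventually_norm_diffQuot_sub_le (hγ : 0 < γ) (hγ1 : γ ≤ 1) (hT : 0 < T)
    (hf : LipschitzWith K f)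
    (hf' : ∀ z d, Tendsto (fun τ : ℝ => τ⁻¹ • (f (z + τ • d) - f z)) (𝓝[>] 0) (𝓝 (f' z d)))
    (hy : IsMildSolution γ T y₀ f a ℓ y) (hδy : IsLinSolution γ T f' a ℓ y δa δℓ δy)
    {Y : ℝ → ℝ → Vec n} (hY : ∀ τ ∈ Ioi (0:ℝ),
      IsMildSolution γ T y₀ f (fun s => a s + τ • δa s) (fun s => ℓ s + τ • δℓ s) (Y τ))
    (ha : MemLp a ⊤ (volume.restrict (Ioc 0 T))) (hℓ : MemLp ℓ ⊤ (volume.restrict (Ioc 0 T)))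
    (hδa : MemLp δa ⊤ (volume.restrict (Ioc 0 T))) (hδℓ : MemLp δℓ ⊤ (volume.restrict (Ioc 0 T)))
    (haC : ∀ s ∈ Ioc 0 T, ‖a s‖ ≤ C) (hδaC : ∀ s ∈ Ioc 0 T, ‖δa s‖ ≤ C)
    (hδℓC : ∀ s ∈ Ioc 0 T, ‖δℓ s‖ ≤ C) {ε : ℝ} (hε : 0 < ε) :
    ∀ᶠ τ in 𝓝[>] (0:ℝ), ∀ t ∈ Icc 0 T, ‖τ⁻¹ • (Y τ t - y t) - δy t‖ ≤ ε := by
  have hC : 0 ≤ C := (norm_nonneg _).trans (haC T ⟨hT, le_rfl⟩)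
  obtain ⟨M, hM0, hM⟩ := hy.exists_norm_perturb_sub_le hγ hT hf hY ha hℓ hδa hδℓ haC hδaC hδℓC
  obtain ⟨R, hR0, hdR⟩ := exists_forall_norm_mv_add_mv_add_le hT hy.1 hδy.1 haC hδaC hδℓC
  set K₁ := fracGronwallConst γ (K * C) T
  set A := T ^ γ / Real.Gamma (γ + 1) * (K * (C * M))
  have hK₁ : 0 ≤ K₁ := fracGronwallConst_nonneg
  obtain ⟨η, hη, hK₁η⟩ : ∃ η > 0, K₁ * (η + η) ≤ ε :=
    ⟨ε / (2 * (K₁ + 1)), by positivity, by field_simp; nlinarith⟩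
  have hsmall : ∀ᶠ τ in 𝓝[>] (0:ℝ), τ ≤ 1 ∧ A * τ ≤ η := by
    have hA : Tendsto (fun τ => A * τ) (𝓝[>] 0) (𝓝 0) := by
      simpa using ((continuous_const_mul A).tendsto 0).mono_left nhdsWithin_le_nhds
    exact (eventually_nhdsWithin_of_eventually_nhds (eventually_le_nhds one_pos)).and
      (hA.eventually (eventually_le_nhds hη))
  filter_upwards [self_mem_nhdsWithin, hsmall, eventually_forall_fracIntegral_norm_slope_sub_le
    hγ hγ1 hf hf' (memLp_top_mv_add hy.1 ha hℓ).1
    (memLp_top_mv_add_mv_add hy.1 hδy.1 ha hδa hδℓ).1 hR0 hdR hη] with τ hτ ⟨hτ1, hAτ⟩ hq t ht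
  calc ‖τ⁻¹ • (Y τ t - y t) - δy t‖
      ≤ K₁ * (T ^ γ / Real.Gamma (γ + 1) * (K * (C * (τ * M))) + η) :=
        hδy.norm_diffQuot_sub_le hγ hf hf' hy hτ (hY τ hτ) ha hℓ hδa hδℓ hC haC
          (mul_nonneg hC (mul_nonneg (le_of_lt hτ) hM0)) (fun s hs => mul_le_mul (hδaC s hs)
            (hM τ ⟨hτ, hτ1⟩ s (Ioc_subset_Icc_self hs)) (norm_nonneg _) hC) hq t ht
    _ ≤ K₁ * (η + η) := by
        gcongr
        linarith [show T ^ γ / Real.Gamma (γ + 1) * (K * (C * (τ * M))) = A * τ by ring]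
    _ ≤ ε := hK₁η

end Linearization

theorem stmt_6_general {n : ℕ} (γ T L : ℝ) (hγ : γ ∈ Ioo (0:ℝ) 1) (hT : 0 < T)
    (y₀ : Vec n) (f : Vec n → Vec n) (f' : Vec n → Vec n → Vec n)
    (hf : ∀ z₁ z₂ : Vec n, ‖f z₁ - f z₂‖ ≤ L * ‖z₁ - z₂‖)
    (hf' : ∀ z d : Vec n,
      Tendsto (fun τ : ℝ => τ⁻¹ • (f (z + τ • d) - f z)) (𝓝[>] 0) (𝓝 (f' z d)))
    (a δa : ℝ → Mat n) (ℓ δℓ : ℝ → Vec n)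
    (ha : Measurable a) (hℓ : Measurable ℓ) (hδa : Measurable δa) (hδℓ : Measurable δℓ)
    (hbd : ∃ C : ℝ, ∀ t ∈ Icc (0:ℝ) T, ‖a t‖ ≤ C ∧ ‖ℓ t‖ ≤ C ∧ ‖δa t‖ ≤ C ∧ ‖δℓ t‖ ≤ C)
    (y : ℝ → Vec n) (hy : IsMildSolution γ T y₀ f a ℓ y)
    (δy : ℝ → Vec n) (hδy : IsLinSolution γ T f' a ℓ y δa δℓ δy)
    (Y : ℝ → ℝ → Vec n)
    (hY : ∀ τ ∈ Ioi (0:ℝ),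
      IsMildSolution γ T y₀ f (fun s => a s + τ • δa s) (fun s => ℓ s + τ • δℓ s) (Y τ)) :
    ∀ ε > (0:ℝ), ∃ τ₀ > (0:ℝ), ∀ τ ∈ Ioo (0:ℝ) τ₀, ∀ t ∈ Icc (0:ℝ) T,
      ‖τ⁻¹ • (Y τ t - y t) - δy t‖ ≤ ε := by
  obtain ⟨C, hC⟩ := hbd
  have hC' : ∀ s ∈ Ioc 0 T, ‖a s‖ ≤ C ∧ ‖ℓ s‖ ≤ C ∧ ‖δa s‖ ≤ C ∧ ‖δℓ s‖ ≤ C :=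
    fun s hs => hC s (Ioc_subset_Icc_self hs)
  have hfL : LipschitzWith (Real.toNNReal L) f :=
    LipschitzWith.of_dist_le' fun z₁ z₂ => by simpa only [dist_eq_norm] using hf z₁ z₂
  have hbdd {ι : Type} [Fintype ι] {u : ℝ → EuclideanSpace ℝ ι} (hu : Measurable u)
      (huC : ∀ s ∈ Ioc 0 T, ‖u s‖ ≤ C) : MemLp u ⊤ (volume.restrict (Ioc 0 T)) :=
    memLp_top_restrict_of_forall_norm_le measurableSet_Ioc hu.aestronglyMeasurable huC
  intro ε hε
  obtain ⟨τ₀, hτ₀, hsub⟩ := mem_nhdsGT_iff_exists_Ioo_subset.1 <|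
    hδy.eventually_norm_diffQuot_sub_le hγ.1 hγ.2.le hT hfL hf' hy hY
      (hbdd ha fun s hs => (hC' s hs).1) (hbdd hℓ fun s hs => (hC' s hs).2.1)
      (hbdd hδa fun s hs => (hC' s hs).2.2.1) (hbdd hδℓ fun s hs => (hC' s hs).2.2.2)
      (fun s hs => (hC' s hs).1) (fun s hs => (hC' s hs).2.2.1) (fun s hs => (hC' s hs).2.2.2) hε
  exact ⟨τ₀, hτ₀, hsub⟩

/-- The solution operator `S` is directionally differentiable: if
`y = S(a,ℓ)`, `y^τ = S(a+τδa, ℓ+τδℓ)` for `τ > 0`, and `δy` solves the linearized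
integral equation, then `‖(y^τ - y)/τ - δy‖_{C([0,T];ℝⁿ)} → 0` as `τ ↓ 0`
(stated as uniform convergence on `[0,T]`). -/
theorem stmt_6 {n : ℕ} (γ T L : ℝ) (hγ : γ ∈ Ioo (0:ℝ) 1) (hT : 0 < T) (hL : 0 < L)
    (y₀ : Vec n) (f : Vec n → Vec n) (f' : Vec n → Vec n → Vec n)
    (hf : ∀ z₁ z₂ : Vec n, ‖f z₁ - f z₂‖ ≤ L * ‖z₁ - z₂‖)
    (hf' : ∀ z d : Vec n,
      Tendsto (fun τ : ℝ => τ⁻¹ • (f (z + τ • d) - f z)) (𝓝[>] 0) (𝓝 (f' z d)))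
    (a δa : ℝ → Mat n) (ℓ δℓ : ℝ → Vec n)
    (ha : Measurable a) (hℓ : Measurable ℓ) (hδa : Measurable δa) (hδℓ : Measurable δℓ)
    (hbd : ∃ C : ℝ, ∀ t ∈ Icc (0:ℝ) T, ‖a t‖ ≤ C ∧ ‖ℓ t‖ ≤ C ∧ ‖δa t‖ ≤ C ∧ ‖δℓ t‖ ≤ C)
    (y : ℝ → Vec n) (hy : IsMildSolution γ T y₀ f a ℓ y)
    (δy : ℝ → Vec n) (hδy : IsLinSolution γ T f' a ℓ y δa δℓ δy)
    (Y : ℝ → ℝ → Vec n)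
    (hY : ∀ τ ∈ Ioi (0:ℝ),
      IsMildSolution γ T y₀ f (fun s => a s + τ • δa s) (fun s => ℓ s + τ • δℓ s) (Y τ)) :
    ∀ ε > (0:ℝ), ∃ τ₀ > (0:ℝ), ∀ τ ∈ Ioo (0:ℝ) τ₀, ∀ t ∈ Icc (0:ℝ) T,
      ‖τ⁻¹ • (Y τ t - y t) - δy t‖ ≤ ε :=
  stmt_6_general γ T L hγ hT y₀ f f' hf hf' a δa ℓ δℓ ha hℓ hδa hδℓ hbd y hy δy hδy Y hY
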